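/- arXiv:1007.2747 — 2 statements merged into one kernel-verified Lean document; each statement's English description precedes it below -/
import Mathlib

section
/- If t_0 is a common root of p and q, then the vector (β_0^{(n-1)}(t_0), β_1^{(n-1)}(t_0), …, β_{n-1}^{(n-1)}(t_0)) lies in the nullspace of the Bernstein-Bézout matrix of p and q, i.e., B applied to this vector gives the zero vector. -/
/-!
Setting `s = t₀` in the Bézout identity kills the left-hand side, so for every `t ≠ t₀`
the Bernstein combination `∑ᵢ (B v(t₀))ᵢ β_i^{(n-1)}(t)` vanishes. The substitution
`x = t / (1 - t)` turns `β_i^{(n-1)}(t)` into `(1 - t)^(n-1) C(n-1,i) xⁱ`, so the combination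
becomes a polynomial in `x` with infinitely many roots; its coefficients `C(n-1,i) (B v(t₀))ᵢ`
therefore vanish.
-/

open Polynomial

/-- Bernstein basis polynomial `β_i^{(m)}(t) = C(m,i) (1-t)^(m-i) t^i`, as a real function. -/
noncomputable def bern (m i : ℕ) (t : ℝ) : ℝ := (m.choose i : ℝ) * (1 - t) ^ (m - i) * t ^ i

lemma bern_eq_of_ne_one {m i : ℕ} (hi : i ≤ m) {t : ℝ} (ht : t ≠ 1) :
    bern m i t = (1 - t) ^ m * ((m.choose i : ℝ) * (t / (1 - t)) ^ i) := by
  have h1t : 1 - t ≠ 0 := sub_ne_zero.mpr ht.symm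
  rw [bern, div_pow, ← Nat.sub_add_cancel hi, pow_add, Nat.add_sub_cancel]
  field_simp

lemma sum_mul_bern_eq_eval_ofFn {n : ℕ} (c : Fin n → ℝ) {t : ℝ} (ht : t ≠ 1) :
    ∑ i, c i * bern (n - 1) i t
      = (1 - t) ^ (n - 1) *
          (ofFn n fun i => c i * ((n - 1).choose i : ℝ)).eval (t / (1 - t)) := by
  rw [ofFn_eq_sum_monomial, eval_finsetSum, Finset.mul_sum]
  refine Finset.sum_congr rfl fun i _ => ?_
  rw [bern_eq_of_ne_one (by omega) ht, eval_monomial]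
  ring

lemma injOn_div_one_sub : Set.InjOn (fun t : ℝ => t / (1 - t)) {1}ᶜ := by
  intro s hs t ht hst
  have hs' : 1 - s ≠ 0 := sub_ne_zero.mpr (Ne.symm hs)
  have ht' : 1 - t ≠ 0 := sub_ne_zero.mpr (Ne.symm ht)
  field_simp at hst
  linarith

theorem eq_zero_of_sum_mul_bern_eq_zero {n : ℕ} {c : Fin n → ℝ} {S : Set ℝ}
    (hS : S.Infinite)
    (h : ∀ t ∈ S, ∑ i, c i * bern (n - 1) i t = 0) : c = 0 := by
  set P := ofFn n fun i => c i * ((n - 1).choose i : ℝ)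
  have hroots : (fun t : ℝ => t / (1 - t)) '' (S \ {1}) ⊆ {x | P.IsRoot x} := by
    rintro _ ⟨t, ⟨htS, ht1⟩, rfl⟩
    have h1t : (1 - t) ^ (n - 1) ≠ 0 := pow_ne_zero _ (sub_ne_zero.mpr (Ne.symm ht1))
    have := h t htS
    rw [sum_mul_bern_eq_eval_ofFn c ht1] at this
    exact (mul_eq_zero.mp this).resolve_left h1t
  have hinj := injOn_div_one_sub.mono (Set.sdiff_subset_compl S {1})
  have hP : P = 0 := eq_zero_of_infinite_isRoot P <|
    ((hS.sdiff (Set.finite_singleton 1)).image hinj).mono hroots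
  funext i
  have hci := congrArg (coeff · i) hP
  simp only [P, ofFn_coeff_eq_val_of_lt _ i.isLt, coeff_zero] at hci
  have hchoose : ((n - 1).choose i : ℝ) ≠ 0 := by
    exact_mod_cast (Nat.choose_pos (by omega)).ne'
  exact (mul_eq_zero.mp hci).resolve_right hchoose

lemma sum_mulVec_mul_bern_eq_zero {n : ℕ} {p q : ℝ[X]} {B : Matrix (Fin n) (Fin n) ℝ}
    (hB : ∀ t s : ℝ, p.eval t * q.eval s - p.eval s * q.eval t
      = (t - s) * ∑ i : Fin n, ∑ j : Fin n, B i j * bern (n - 1) i t * bern (n - 1) j s)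
    {t₀ : ℝ} (hpt : p.eval t₀ = 0) (hqt : q.eval t₀ = 0) {t : ℝ} (ht : t ≠ t₀) :
    ∑ i, B.mulVec (fun j : Fin n => bern (n - 1) j t₀) i * bern (n - 1) i t = 0 := by
  have h := hB t t₀
  rw [hpt, hqt, mul_zero, zero_mul, sub_zero, eq_comm, mul_eq_zero] at h
  rw [← h.resolve_left (sub_ne_zero.mpr ht)]
  simp only [Matrix.mulVec, dotProduct, Finset.sum_mul]
  exact Finset.sum_congr rfl fun i _ => Finset.sum_congr rfl fun j _ => by ring

theorem bernstein_vector_mem_nullspace_general (n : ℕ) (p q : Polynomial ℝ)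
    (B : Matrix (Fin n) (Fin n) ℝ)
    (hB : ∀ t s : ℝ, p.eval t * q.eval s - p.eval s * q.eval t
      = (t - s) * ∑ i : Fin n, ∑ j : Fin n, B i j * bern (n - 1) i t * bern (n - 1) j s)
    (t₀ : ℝ) (hpt : p.eval t₀ = 0) (hqt : q.eval t₀ = 0) :
    B.mulVec (fun j : Fin n => bern (n - 1) j t₀) = 0 :=
  eq_zero_of_sum_mul_bern_eq_zero (Set.finite_singleton t₀).infinite_compl
    fun _ ht => sum_mulVec_mul_bern_eq_zero hB hpt hqt ht

/-- If `t₀` is a common root of `p` and `q`, then the vector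
`(β_0^{(n-1)}(t₀), …, β_{n-1}^{(n-1)}(t₀))` is in the nullspace of the Bernstein–Bézout matrix. -/
theorem bernstein_vector_mem_nullspace (n : ℕ) (hn : 1 ≤ n) (p q : Polynomial ℝ)
    (hp : p.natDegree ≤ n) (hq : q.natDegree ≤ n)
    (B : Matrix (Fin n) (Fin n) ℝ)
    (hB : ∀ t s : ℝ, p.eval t * q.eval s - p.eval s * q.eval t
      = (t - s) * ∑ i : Fin n, ∑ j : Fin n, B i j * bern (n - 1) i t * bern (n - 1) j s)
    (t₀ : ℝ) (hpt : p.eval t₀ = 0) (hqt : q.eval t₀ = 0) :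
    B.mulVec (fun j : Fin n => bern (n - 1) j t₀) = 0 :=
  bernstein_vector_mem_nullspace_general n p q B hB t₀ hpt hqt
end

section
/- The entries of the Bernstein-Bézout matrix B of p = Σ p_i β_i^{(n)} and q = Σ q_i β_i^{(n)} satisfy the recurrence: B[i,1] = (n/i)(p_i q_0 − p_0 q_i) for 1 ≤ i ≤ n; B[n, j+1] = (n/(n−j))(p_n q_j − p_j q_n) for 1 ≤ j ≤ n−1; and B[i, j+1] = (n²/(i(n−j)))(p_i q_j − p_j q_i) + (j(n−i)/(i(n−j)))·B[i+1, j] for 1 ≤ i, j ≤ n−1. -/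
open Finset Polynomial

theorem sum_mul_sum_sub_sum_mul_sum {ι R : Type*} [CommRing R] (s : Finset ι)
    (f g u v : ι → R) :
    (∑ i ∈ s, f i * u i) * (∑ j ∈ s, g j * v j) - (∑ i ∈ s, f i * v i) * (∑ j ∈ s, g j * u j)
      = ∑ a ∈ s, ∑ b ∈ s, (f a * g b - f b * g a) * u a * v b := by
  rw [sum_mul_sum, sum_mul_sum, sum_comm (s := s) (t := s)
    (f := fun a b => f a * v a * (g b * u b)), ← sum_sub_distrib]
  refine sum_congr rfl fun a _ => ?_
  rw [← sum_sub_distrib]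
  exact sum_congr rfl fun b _ => by ring

theorem one_add_pow_mul_bern_div_one_add {m i : ℕ} (hi : i ≤ m) {x : ℝ} (hx : 1 + x ≠ 0) :
    (1 + x) ^ m * bern m i (x / (1 + x)) = m.choose i * x ^ i := by
  have h1 : 1 - x / (1 + x) = 1 / (1 + x) := by field_simp; ring
  rw [bern, h1, div_pow, div_pow, one_pow, ← Nat.sub_add_cancel hi, pow_add,
    Nat.add_sub_cancel]
  field_simp

theorem eq_zero_of_forall_sum_bern_eq_zero {m : ℕ} {c : ℕ → ℝ}
    (h : ∀ t, ∑ i ∈ range (m + 1), c i * bern m i t = 0) {i : ℕ} (hi : i ≤ m) : c i = 0 := by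
  set Q : ℝ[X] := ∑ k ∈ range (m + 1), C (c k * m.choose k) * X ^ k
  have hQ : Q = 0 := by
    -- substituting `t = x / (1 + x)` turns the Bernstein sum into `(1 + x)⁻ᵐ Q(x)`
    refine eq_zero_of_infinite_isRoot Q ((Set.Ioi_infinite 0).mono fun x hx => ?_)
    have hx : 1 + x ≠ 0 := by simp only [Set.mem_Ioi] at hx; positivity
    calc Q.eval x = (1 + x) ^ m * ∑ k ∈ range (m + 1), c k * bern m k (x / (1 + x)) := by
          simp only [Q, eval_finsetSum, eval_mul, eval_C, eval_pow, eval_X, mul_sum]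
          refine sum_congr rfl fun k hk => ?_
          rw [mul_left_comm, one_add_pow_mul_bern_div_one_add (mem_range_succ_iff.mp hk) hx]
          ring
      _ = 0 := by rw [h, mul_zero]
  have hcoeff := congrArg (coeff · i) hQ
  simp only [Q, finsetSum_coeff, coeff_C_mul_X_pow, sum_ite_eq, mem_range_succ_iff, hi,
    if_true, coeff_zero] at hcoeff
  exact (mul_eq_zero.mp hcoeff).resolve_right (Nat.cast_ne_zero.mpr (Nat.choose_pos hi).ne')

theorem eq_zero_of_forall_sum_sum_bern_eq_zero {m : ℕ} {c : ℕ → ℕ → ℝ}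
    (h : ∀ t s, ∑ a ∈ range (m + 1), ∑ b ∈ range (m + 1),
      c a b * bern m a t * bern m b s = 0) {a b : ℕ} (ha : a ≤ m) (hb : b ≤ m) : c a b = 0 := by
  have hrow (s : ℝ) : ∑ b ∈ range (m + 1), c a b * bern m b s = 0 := by
    refine eq_zero_of_forall_sum_bern_eq_zero
      (c := fun a => ∑ b ∈ range (m + 1), c a b * bern m b s) (fun t => ?_) ha
    rw [← h t s]
    refine sum_congr rfl fun a _ => ?_
    rw [sum_mul]
    exact sum_congr rfl fun b _ => by ring
  exact eq_zero_of_forall_sum_bern_eq_zero hrow hb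

theorem eq_of_forall_sum_sum_bern_eq {m : ℕ} {c d : ℕ → ℕ → ℝ}
    (h : ∀ t s, ∑ a ∈ range (m + 1), ∑ b ∈ range (m + 1), c a b * bern m a t * bern m b s
      = ∑ a ∈ range (m + 1), ∑ b ∈ range (m + 1), d a b * bern m a t * bern m b s)
    {a b : ℕ} (ha : a ≤ m) (hb : b ≤ m) : c a b = d a b :=
  sub_eq_zero.mp <| eq_zero_of_forall_sum_sum_bern_eq_zero (c := fun a b => c a b - d a b)
    (fun t s => by simp only [sub_mul, sum_sub_distrib, h, sub_self]) ha hb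

theorem mul_bern (m i : ℕ) (t : ℝ) :
    t * bern m i t = (i + 1) / (m + 1) * bern (m + 1) (i + 1) t := by
  have hchoose : ((m + 1 : ℕ) : ℝ) * m.choose i = (m + 1).choose (i + 1) * (i + 1 : ℕ) := by
    exact_mod_cast Nat.add_one_mul_choose_eq m i
  push_cast at hchoose
  rw [bern, bern, Nat.add_sub_add_right, pow_succ]
  field_simp
  linear_combination (1 - t) ^ (m - i) * t ^ i * t * hchoose

theorem one_sub_mul_bern {m i : ℕ} (hi : i ≤ m) (t : ℝ) :
    (1 - t) * bern m i t = (m + 1 - i) / (m + 1) * bern (m + 1) i t := by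
  have hchoose :
      (m.choose i : ℝ) * ((m + 1 : ℕ) : ℝ) = (m + 1).choose i * ((m + 1 - i : ℕ) : ℝ) := by
    exact_mod_cast Nat.choose_mul_succ_eq m i
  rw [Nat.cast_sub (by omega)] at hchoose
  push_cast at hchoose
  rw [bern, bern, Nat.sub_add_comm hi, pow_succ]
  field_simp
  linear_combination (1 - t) ^ (m - i) * (1 - t) * t ^ i * hchoose

theorem mul_sum_bern (m : ℕ) (c : ℕ → ℝ) (t : ℝ) :
    t * ∑ i ∈ range (m + 1), c (i + 1) * bern m i t
      = ∑ a ∈ range (m + 2), a / (m + 1) * c a * bern (m + 1) a t := by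
  rw [mul_sum, sum_range_succ' (n := m + 1)]
  simp only [CharP.cast_eq_zero, zero_div, zero_mul, add_zero]
  refine sum_congr rfl fun i _ => ?_
  rw [mul_left_comm, mul_bern]
  push_cast
  ring

theorem one_sub_mul_sum_bern (m : ℕ) (c : ℕ → ℝ) (t : ℝ) :
    (1 - t) * ∑ i ∈ range (m + 1), c (i + 1) * bern m i t
      = ∑ a ∈ range (m + 2), (m + 1 - a) / (m + 1) * c (a + 1) * bern (m + 1) a t := by
  rw [mul_sum, sum_range_succ (n := m + 1)]
  simp only [Nat.cast_add, Nat.cast_one, sub_self, zero_div, zero_mul, add_zero]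
  refine sum_congr rfl fun i hi => ?_
  rw [mul_left_comm, one_sub_mul_bern (mem_range_succ_iff.mp hi)]
  ring

theorem sub_mul_sum_sum_bern (m : ℕ) (M : ℕ → ℕ → ℝ) (t s : ℝ) :
    (t - s) * ∑ i ∈ range (m + 1), ∑ j ∈ range (m + 1),
        M (i + 1) (j + 1) * bern m i t * bern m j s
      = ∑ a ∈ range (m + 2), ∑ b ∈ range (m + 2),
          (a * (m + 1 - b) * M a (b + 1) - (m + 1 - a) * b * M (a + 1) b) / (m + 1) ^ 2
            * bern (m + 1) a t * bern (m + 1) b s := by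
  set row : ℕ → ℝ → ℝ := fun k s => ∑ j ∈ range (m + 1), M k (j + 1) * bern m j s
  calc (t - s) * ∑ i ∈ range (m + 1), ∑ j ∈ range (m + 1),
        M (i + 1) (j + 1) * bern m i t * bern m j s
      = t * ∑ i ∈ range (m + 1), ((1 - s) * row (i + 1) s) * bern m i t
          - (1 - t) * ∑ i ∈ range (m + 1), (s * row (i + 1) s) * bern m i t := by
        simp only [row, mul_sum, sum_mul]
        rw [← sum_sub_distrib]
        refine sum_congr rfl fun i _ => ?_
        rw [← sum_sub_distrib]
        exact sum_congr rfl fun j _ => by ring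
    _ = t * ∑ i ∈ range (m + 1), (∑ b ∈ range (m + 2),
            (m + 1 - b) / (m + 1) * M (i + 1) (b + 1) * bern (m + 1) b s) * bern m i t
          - (1 - t) * ∑ i ∈ range (m + 1), (∑ b ∈ range (m + 2),
            b / (m + 1) * M (i + 1) b * bern (m + 1) b s) * bern m i t := by
        simp only [row, one_sub_mul_sum_bern, mul_sum_bern]
    _ = ∑ a ∈ range (m + 2), a / (m + 1) * (∑ b ∈ range (m + 2),
            (m + 1 - b) / (m + 1) * M a (b + 1) * bern (m + 1) b s) * bern (m + 1) a t
          - ∑ a ∈ range (m + 2), (m + 1 - a) / (m + 1) * (∑ b ∈ range (m + 2),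
            b / (m + 1) * M (a + 1) b * bern (m + 1) b s) * bern (m + 1) a t :=
        congrArg₂ (· - ·)
          (mul_sum_bern m (fun k => ∑ b ∈ range (m + 2),
            (m + 1 - b) / (m + 1) * M k (b + 1) * bern (m + 1) b s) t)
          (one_sub_mul_sum_bern m (fun k => ∑ b ∈ range (m + 2),
            b / (m + 1) * M k b * bern (m + 1) b s) t)
    _ = _ := by
        rw [← sum_sub_distrib]
        refine sum_congr rfl fun a _ => ?_
        simp only [mul_sum, sum_mul]
        rw [← sum_sub_distrib]
        exact sum_congr rfl fun b _ => by field_simp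

/-- The Bini–Gemignani recurrence for the entries of the Bernstein–Bézout matrix of
`p = Σ pc_i β_i^{(n)}` and `q = Σ qc_i β_i^{(n)}`.  `M i j` denotes the `(i,j)` entry
with 1-based indices `1 ≤ i, j ≤ n`. -/
theorem bernsteinBezout_recurrence (n : ℕ) (hn : 1 ≤ n) (pc qc : ℕ → ℝ) (M : ℕ → ℕ → ℝ)
    (hM : ∀ t s : ℝ,
      (∑ i ∈ Finset.range (n + 1), pc i * bern n i t)
          * (∑ i ∈ Finset.range (n + 1), qc i * bern n i s)
        - (∑ i ∈ Finset.range (n + 1), pc i * bern n i s)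
          * (∑ i ∈ Finset.range (n + 1), qc i * bern n i t)
      = (t - s) * ∑ i ∈ Finset.range n, ∑ j ∈ Finset.range n,
          M (i + 1) (j + 1) * bern (n - 1) i t * bern (n - 1) j s) :
    (∀ i : ℕ, 1 ≤ i → i ≤ n →
      M i 1 = ((n : ℝ) / i) * (pc i * qc 0 - pc 0 * qc i))
    ∧ (∀ j : ℕ, 1 ≤ j → j ≤ n - 1 →
      M n (j + 1) = ((n : ℝ) / ((n : ℝ) - j)) * (pc n * qc j - pc j * qc n))
    ∧ (∀ i j : ℕ, 1 ≤ i → i ≤ n - 1 → 1 ≤ j → j ≤ n - 1 →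
      M i (j + 1) = ((n : ℝ) ^ 2 / ((i : ℝ) * ((n : ℝ) - j))) * (pc i * qc j - pc j * qc i)
        + (((j : ℝ) * ((n : ℝ) - i)) / ((i : ℝ) * ((n : ℝ) - j))) * M (i + 1) j) := by
  obtain ⟨m, rfl⟩ : ∃ m, n = m + 1 := ⟨n - 1, by omega⟩
  simp only [Nat.add_sub_cancel] at hM ⊢
  push_cast
  have hcoeff {a b : ℕ} (ha : a ≤ m + 1) (hb : b ≤ m + 1) : pc a * qc b - pc b * qc a
      = (a * (m + 1 - b) * M a (b + 1) - (m + 1 - a) * b * M (a + 1) b) / (m + 1) ^ 2 :=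
    eq_of_forall_sum_sum_bern_eq (c := fun a b => pc a * qc b - pc b * qc a)
      (d := fun a b => (a * (m + 1 - b) * M a (b + 1) - (m + 1 - a) * b * M (a + 1) b)
        / ((m : ℝ) + 1) ^ 2)
      (fun t s => by rw [← sum_mul_sum_sub_sum_mul_sum, hM, sub_mul_sum_sum_bern]) ha hb
  refine ⟨fun i hi hin => ?_, fun j hj hjn => ?_, fun i j hi hin hj hjn => ?_⟩
  · have hi₀ : (i : ℝ) ≠ 0 := by positivity
    rw [hcoeff hin (Nat.zero_le _)]
    field_simp
    ring
  · have hj : (m : ℝ) + 1 - j ≠ 0 := sub_ne_zero.mpr (mod_cast (by omega : m + 1 ≠ j))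
    rw [hcoeff le_rfl (by omega)]
    push_cast
    field_simp
    ring
  · have hi₀ : (i : ℝ) ≠ 0 := by positivity
    have hj : (m : ℝ) + 1 - j ≠ 0 := sub_ne_zero.mpr (mod_cast (by omega : m + 1 ≠ j))
    rw [hcoeff (by omega) (by omega)]
    field_simp
    ring
end
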